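/- Let K ⊆ ℝⁿ be a nonempty closed set, f = (f_1,…,f_q) a vector polynomial, x̄ ∈ K, and I a nonempty subset of {1,…,q} such that f_i is bounded from below on K_x̄ for every i ∈ I. The following are equivalent: (i) for every sequence x_k ∈ K with ‖x_k‖ → +∞ and f_i(x_k) ≤ f_i(x̄) for all i and all k, one has ‖(f_i(x_k))_{i∈I}‖ → +∞ (i.e., f restricted to K is I-proper at the sublevel f(x̄)); (ii) there exist a closed set S ⊆ ℝⁿ with (K_x̄)_∞ ⊆ S_∞ ⊆ K_∞ and λ ∈ ℝ^q with λ_i ≥ 0 for all i and λ ≠ 0 such that SOL(S_∞, (Σ_{i=1}^q λ_i f_i)^∞) = {0}; (iii) there exists a closed set S ⊆ ℝⁿ with (K_x̄)_∞ ⊆ S_∞ ⊆ K_∞ such that SOL^w(S_∞, f^∞) = {0}; (iv) there exists a closed set S ⊆ ℝⁿ with (K_x̄)_∞ ⊆ S_∞ ⊆ K_∞ such that SOL^s(S_∞, f^∞) = {0}. -/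

import Mathlib

open Filter Topology MvPolynomial Bornology

noncomputable section

/-- The asymptotic (recession) cone of a set `A ⊆ ℝⁿ`. -/
def asymCone {n : ℕ} (A : Set (Fin n → ℝ)) : Set (Fin n → ℝ) :=
  {v | ∃ (t : ℕ → ℝ) (x : ℕ → (Fin n → ℝ)),
    Filter.Tendsto t Filter.atTop Filter.atTop ∧ (∀ k, x k ∈ A) ∧
    Filter.Tendsto (fun k => (t k)⁻¹ • x k) Filter.atTop (nhds v)}

/-- Pareto efficient solutions of the vector map `g` on `C`. -/
def SOLs {n q : ℕ} (C : Set (Fin n → ℝ)) (g : Fin q → (Fin n → ℝ) → ℝ) :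
    Set (Fin n → ℝ) :=
  {x | x ∈ C ∧ ¬ ∃ y ∈ C, (∀ i, g i y ≤ g i x) ∧ (∃ i, g i y ≠ g i x)}

/-- Weak Pareto efficient solutions of the vector map `g` on `C`. -/
def SOLw {n q : ℕ} (C : Set (Fin n → ℝ)) (g : Fin q → (Fin n → ℝ) → ℝ) :
    Set (Fin n → ℝ) :=
  {x | x ∈ C ∧ ¬ ∃ y ∈ C, ∀ i, g i y < g i x}

/-- Global minimizers of a scalar function `p` on `C`. -/
def SOLmin {n : ℕ} (C : Set (Fin n → ℝ)) (p : (Fin n → ℝ) → ℝ) :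
    Set (Fin n → ℝ) :=
  {x | x ∈ C ∧ ∀ y ∈ C, p x ≤ p y}

/-- The recession polynomial (leading term: top-degree homogeneous part) of a
polynomial, as a function on `ℝⁿ`. -/
noncomputable def recPoly {n : ℕ} (p : MvPolynomial (Fin n) ℝ) : (Fin n → ℝ) → ℝ :=
  fun x => MvPolynomial.eval x (MvPolynomial.homogeneousComponent p.totalDegree p)

/-!
The whole proof runs through the boundedness of the sublevel set `K_x̄`. On `K_x̄` every `f_i`
with `i ∈ I` is squeezed between its lower bound and `f_i(x̄)`, so (i) holds exactly when no
sequence of `K_x̄` escapes to infinity, i.e. when `K_x̄` is bounded. An unbounded set has a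
nonzero asymptotic direction `v`, and along the sequence producing `v` the bound
`p(x_k) ≤ c` forces `p^∞(v) ≤ p^∞(0)` for every polynomial `p` bounded above on `K_x̄`.
Hence `v` is as good as `0` for `f^∞` and for `(Σ λ_i f_i)^∞`, and lies in every
solution set containing `0`; so none of these sets is `{0}`. Conversely, when `K_x̄` is
bounded, `S = {0}` witnesses (ii)–(iv).
-/

section AsymptoticCone

variable {n : ℕ}

theorem exists_seq_mem_tendsto_norm_atTop {E : Type*} [SeminormedAddCommGroup E] {A : Set E}
    (hA : ¬IsBounded A) : ∃ x : ℕ → E, (∀ k, x k ∈ A) ∧ Tendsto (fun k => ‖x k‖) atTop atTop := by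
  have h : ∀ k : ℕ, ∃ x ∈ A, (k : ℝ) < ‖x‖ := by
    by_contra! hc
    obtain ⟨k, hk⟩ := hc
    exact hA (isBounded_iff_forall_norm_le.mpr ⟨k, hk⟩)
  choose x hxA hxk using h
  exact ⟨x, hxA, tendsto_atTop_mono (fun k => (hxk k).le) tendsto_natCast_atTop_atTop⟩

theorem isBounded_iff_forall_tendsto_norm_comp {E F : Type*} [SeminormedAddCommGroup E]
    [SeminormedAddCommGroup F] {A : Set E} {g : E → F} (hg : IsBounded (g '' A)) :
    (∀ x : ℕ → E, (∀ k, x k ∈ A) → Tendsto (fun k => ‖x k‖) atTop atTop →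
      Tendsto (fun k => ‖g (x k)‖) atTop atTop) ↔ IsBounded A := by
  refine ⟨fun h => ?_, fun hA x hxA hx => ?_⟩
  · by_contra hA
    obtain ⟨x, hxA, hx⟩ := exists_seq_mem_tendsto_norm_atTop hA
    obtain ⟨M, hM⟩ := isBounded_iff_forall_norm_le.mp hg
    obtain ⟨k, hk⟩ := ((h x hxA hx).eventually_gt_atTop M).exists
    exact hk.not_ge (hM _ ⟨x k, hxA k, rfl⟩)
  · obtain ⟨M, hM⟩ := isBounded_iff_forall_norm_le.mp hA
    obtain ⟨k, hk⟩ := (hx.eventually_gt_atTop M).exists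
    exact absurd (hM _ (hxA k)) hk.not_ge

theorem zero_mem_asymCone {A : Set (Fin n → ℝ)} (hA : A.Nonempty) :
    (0 : Fin n → ℝ) ∈ asymCone A := by
  obtain ⟨a, ha⟩ := hA
  have ht : Tendsto (fun k : ℕ => (k : ℝ) + 1) atTop atTop :=
    tendsto_atTop_add_const_right _ 1 tendsto_natCast_atTop_atTop
  refine ⟨_, fun _ => a, ht, fun _ => ha, ?_⟩
  simpa using (tendsto_inv_atTop_zero.comp ht).smul_const a

theorem asymCone_subset_zero_of_isBounded {A : Set (Fin n → ℝ)} (hA : IsBounded A) :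
    asymCone A ⊆ {0} := by
  rintro v ⟨t, x, ht, hxA, hv⟩
  obtain ⟨M, hM⟩ := isBounded_iff_forall_norm_le.mp hA
  have hM' : Tendsto (fun k => (t k)⁻¹ * M) atTop (𝓝 0) := by
    simpa using (tendsto_inv_atTop_zero.comp ht).mul_const M
  refine tendsto_nhds_unique hv (squeeze_zero_norm' ?_ hM')
  filter_upwards [ht.eventually_gt_atTop 0] with k hk
  rw [norm_smul, norm_inv, Real.norm_of_nonneg hk.le]
  exact mul_le_mul_of_nonneg_left (hM _ (hxA k)) (inv_nonneg.mpr hk.le)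

/-- The normalised points `x_k / ‖x_k‖` of a sequence escaping to infinity lie on the compact unit
sphere, so a subsequence converges to a unit vector. -/
theorem exists_ne_zero_mem_asymCone {A : Set (Fin n → ℝ)} (hA : ¬IsBounded A) :
    ∃ v ∈ asymCone A, v ≠ 0 := by
  obtain ⟨x, hxA, hx⟩ := exists_seq_mem_tendsto_norm_atTop hA
  have hpos : ∀ᶠ k in atTop, 0 < ‖x k‖ := hx.eventually_gt_atTop 0
  obtain ⟨k₀, hk₀⟩ := eventually_atTop.mp hpos
  have hsphere : ∀ k, ‖x (k + k₀)‖⁻¹ • x (k + k₀) ∈ Metric.sphere (0 : Fin n → ℝ) 1 := by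
    intro k
    rw [mem_sphere_zero_iff_norm, norm_smul, norm_inv, norm_norm,
      inv_mul_cancel₀ (hk₀ _ (Nat.le_add_left _ _)).ne']
  obtain ⟨v, hv, φ, hφ, hlim⟩ := (isCompact_sphere (0 : Fin n → ℝ) 1).tendsto_subseq hsphere
  refine ⟨v, ⟨_, _, ?_, fun k => hxA (φ k + k₀), hlim⟩, ?_⟩
  · exact hx.comp ((tendsto_add_atTop_nat k₀).comp hφ.tendsto_atTop)
  · rintro rfl
    simp at hv

theorem asymCone_subset_zero_iff {A : Set (Fin n → ℝ)} : asymCone A ⊆ {0} ↔ IsBounded A := by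
  refine ⟨fun h => ?_, asymCone_subset_zero_of_isBounded⟩
  by_contra hA
  obtain ⟨v, hv, hv0⟩ := exists_ne_zero_mem_asymCone hA
  exact hv0 (h hv)

theorem asymCone_zero : asymCone ({0} : Set (Fin n → ℝ)) = {0} :=
  (asymCone_subset_zero_of_isBounded isBounded_singleton).antisymm
    (Set.singleton_subset_iff.mpr (zero_mem_asymCone (Set.singleton_nonempty 0)))

theorem exists_isClosed_asymCone_between_iff {A K : Set (Fin n → ℝ)} (hK : K.Nonempty)
    (P : Set (Fin n → ℝ) → Prop) (hP₀ : P {0}) (hP : ∀ C, asymCone A ⊆ C → P C → asymCone A ⊆ {0}) :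
    (∃ S : Set (Fin n → ℝ), IsClosed S ∧ asymCone A ⊆ asymCone S ∧ asymCone S ⊆ asymCone K ∧
      P (asymCone S)) ↔ IsBounded A := by
  refine ⟨fun ⟨S, _, hAS, _, hPS⟩ => asymCone_subset_zero_iff.mp (hP _ hAS hPS), fun hA => ?_⟩
  refine ⟨{0}, isClosed_singleton, ?_⟩
  rw [asymCone_zero]
  exact ⟨asymCone_subset_zero_of_isBounded hA,
    Set.singleton_subset_iff.mpr (zero_mem_asymCone hK), hP₀⟩

end AsymptoticCone

section RecessionPolynomial

theorem MvPolynomial.IsHomogeneous.eval_smul {σ R : Type*} [Fintype σ] [CommSemiring R]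
    {φ : MvPolynomial σ R} {m : ℕ} (hφ : φ.IsHomogeneous m) (c : R) (x : σ → R) :
    eval (c • x) φ = c ^ m * eval x φ := by
  rw [eval_eq', eval_eq', Finset.mul_sum]
  refine Finset.sum_congr rfl fun d hd => ?_
  have hdeg : ∑ i, d i = m := by
    rw [← hφ (mem_support_iff.mp hd), Finsupp.weight_apply, Finsupp.sum_fintype _ _ (by simp)]
    simp
  simp only [Pi.smul_apply, smul_eq_mul, mul_pow, Finset.prod_mul_distrib,
    Finset.prod_pow_eq_pow_sum, hdeg]
  ring

variable {n : ℕ}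

theorem recPoly_eq_recPoly_zero_of_totalDegree_eq_zero {p : MvPolynomial (Fin n) ℝ}
    (hp : p.totalDegree = 0) (x : Fin n → ℝ) : recPoly p x = recPoly p 0 := by
  simp [recPoly, hp, homogeneousComponent_zero]

theorem recPoly_zero {p : MvPolynomial (Fin n) ℝ} (hp : p.totalDegree ≠ 0) : recPoly p 0 = 0 := by
  rw [recPoly, ← zero_smul ℝ (0 : Fin n → ℝ),
    (homogeneousComponent_isHomogeneous _ p).eval_smul, zero_pow hp, zero_mul]

/-- Splitting `p` into homogeneous components, `p(t y) / t^d = Σ_{j ≤ d} (t⁻¹)^(d-j) p_j(y)`;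
the right side is jointly continuous in `(t⁻¹, y)` and equals `p_d(y)` at `t⁻¹ = 0`. -/
theorem tendsto_eval_div_pow_totalDegree {ι : Type*} {l : Filter ι} (p : MvPolynomial (Fin n) ℝ)
    {t : ι → ℝ} {x : ι → Fin n → ℝ} {v : Fin n → ℝ} (ht : Tendsto t l atTop)
    (hx : Tendsto (fun k => (t k)⁻¹ • x k) l (𝓝 v)) :
    Tendsto (fun k => eval (x k) p / t k ^ p.totalDegree) l (𝓝 (recPoly p v)) := by
  set d := p.totalDegree
  let Q : ℝ × (Fin n → ℝ) → ℝ := fun sy =>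
    ∑ j ∈ Finset.range (d + 1), sy.1 ^ (d - j) * eval sy.2 (homogeneousComponent j p)
  have hQ : Continuous Q := by
    refine continuous_finsetSum _ fun j _ => ?_
    exact (continuous_fst.pow _).mul ((continuous_eval _).comp continuous_snd)
  have hQ₀ : Q (0, v) = recPoly p v := by
    simp only [Q]
    rw [Finset.sum_eq_single_of_mem d (Finset.self_mem_range_succ d)]
    · simp [recPoly, d]
    · intro j hj hjd
      have : d - j ≠ 0 := by have := Finset.mem_range_succ_iff.mp hj; omega
      simp [zero_pow this]
  have hlim := (hQ.tendsto _).comp ((tendsto_inv_atTop_zero.comp ht).prodMk_nhds hx)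
  rw [hQ₀] at hlim
  refine hlim.congr' ?_
  filter_upwards [ht.eventually_gt_atTop 0] with k hk
  have hxk : x k = t k • (t k)⁻¹ • x k := by rw [smul_smul, mul_inv_cancel₀ hk.ne', one_smul]
  simp only [Function.comp_apply, Q]
  conv_rhs => rw [hxk, ← sum_homogeneousComponent p, map_sum, Finset.sum_div]
  refine Finset.sum_congr rfl fun j hj => ?_
  rw [(homogeneousComponent_isHomogeneous j p).eval_smul (t k) ((t k)⁻¹ • x k), inv_pow,
    ← pow_sub_mul_pow (t k) (Finset.mem_range_succ_iff.mp hj)]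
  field_simp
  exact mul_comm _ _

theorem recPoly_le_recPoly_zero_of_mem_asymCone {A : Set (Fin n → ℝ)} {p : MvPolynomial (Fin n) ℝ}
    {c : ℝ} (hA : ∀ x ∈ A, eval x p ≤ c) {v : Fin n → ℝ} (hv : v ∈ asymCone A) :
    recPoly p v ≤ recPoly p 0 := by
  by_cases hp : p.totalDegree = 0
  · exact (recPoly_eq_recPoly_zero_of_totalDegree_eq_zero hp v).le
  obtain ⟨t, x, ht, hxA, hxv⟩ := hv
  have hc : Tendsto (fun k => c / t k ^ p.totalDegree) atTop (𝓝 0) :=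
    tendsto_const_nhds.div_atTop ((tendsto_pow_atTop hp).comp ht)
  rw [recPoly_zero hp]
  refine le_of_tendsto_of_tendsto (tendsto_eval_div_pow_totalDegree p ht hxv) hc ?_
  filter_upwards [ht.eventually_gt_atTop 0] with k hk
  exact div_le_div_of_nonneg_right (hA _ (hxA k)) (by positivity)

theorem eval_sum_C_mul_le {q : ℕ} {f : Fin q → MvPolynomial (Fin n) ℝ} {lam c : Fin q → ℝ}
    (hlam : ∀ i, 0 ≤ lam i) {x : Fin n → ℝ} (hx : ∀ i, eval x (f i) ≤ c i) :
    eval x (∑ i, C (lam i) * f i) ≤ ∑ i, lam i * c i := by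
  simp only [map_sum, eval_mul, eval_C]
  exact Finset.sum_le_sum fun i _ => mul_le_mul_of_nonneg_left (hx i) (hlam i)

end RecessionPolynomial

section ParetoSolutions

variable {n q : ℕ} {C : Set (Fin n → ℝ)} {x y : Fin n → ℝ}

theorem mem_SOLmin_of_le {p : (Fin n → ℝ) → ℝ} (hx : x ∈ SOLmin C p) (hy : y ∈ C)
    (hle : p y ≤ p x) : y ∈ SOLmin C p :=
  ⟨hy, fun z hz => hle.trans (hx.2 z hz)⟩

theorem mem_SOLw_of_le {g : Fin q → (Fin n → ℝ) → ℝ} (hx : x ∈ SOLw C g) (hy : y ∈ C)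
    (hle : ∀ i, g i y ≤ g i x) : y ∈ SOLw C g :=
  ⟨hy, fun ⟨z, hz, hlt⟩ => hx.2 ⟨z, hz, fun i => (hlt i).trans_le (hle i)⟩⟩

theorem mem_SOLs_of_le {g : Fin q → (Fin n → ℝ) → ℝ} (hx : x ∈ SOLs C g) (hy : y ∈ C)
    (hle : ∀ i, g i y ≤ g i x) : y ∈ SOLs C g :=
  ⟨hy, fun ⟨z, hz, hzy, i, hi⟩ =>
    hx.2 ⟨z, hz, fun j => (hzy j).trans (hle j), i,
      ((lt_of_le_of_ne (hzy i) hi).trans_le (hle i)).ne⟩⟩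

theorem SOLmin_singleton (p : (Fin n → ℝ) → ℝ) : SOLmin {x} p = {x} :=
  Set.eq_singleton_iff_unique_mem.mpr ⟨⟨rfl, fun _ hz => hz ▸ le_rfl⟩, fun _ hz => hz.1⟩

theorem SOLw_singleton [Nonempty (Fin q)] (g : Fin q → (Fin n → ℝ) → ℝ) : SOLw {x} g = {x} :=
  Set.eq_singleton_iff_unique_mem.mpr
    ⟨⟨rfl, fun ⟨_, hz, hlt⟩ => (hlt (Classical.arbitrary _)).ne (hz ▸ rfl)⟩, fun _ hz => hz.1⟩

theorem SOLs_singleton (g : Fin q → (Fin n → ℝ) → ℝ) : SOLs {x} g = {x} :=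
  Set.eq_singleton_iff_unique_mem.mpr ⟨⟨rfl, fun ⟨_, hz, _, _, hne⟩ => hne (hz ▸ rfl)⟩,
    fun _ hz => hz.1⟩

end ParetoSolutions

section AsymptoticDirections

variable {n q : ℕ} {A C : Set (Fin n → ℝ)}

theorem asymCone_subset_SOLmin {p : MvPolynomial (Fin n) ℝ} {c : ℝ} (hA : ∀ x ∈ A, eval x p ≤ c)
    (hAC : asymCone A ⊆ C) (h₀ : 0 ∈ SOLmin C (recPoly p)) : asymCone A ⊆ SOLmin C (recPoly p) :=
  fun _ hv => mem_SOLmin_of_le h₀ (hAC hv) (recPoly_le_recPoly_zero_of_mem_asymCone hA hv)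

theorem asymCone_subset_SOLw {f : Fin q → MvPolynomial (Fin n) ℝ} {c : Fin q → ℝ}
    (hA : ∀ x ∈ A, ∀ i, eval x (f i) ≤ c i) (hAC : asymCone A ⊆ C)
    (h₀ : 0 ∈ SOLw C fun i => recPoly (f i)) : asymCone A ⊆ SOLw C fun i => recPoly (f i) :=
  fun _ hv => mem_SOLw_of_le h₀ (hAC hv)
    fun i => recPoly_le_recPoly_zero_of_mem_asymCone (fun x hx => hA x hx i) hv

theorem asymCone_subset_SOLs {f : Fin q → MvPolynomial (Fin n) ℝ} {c : Fin q → ℝ}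
    (hA : ∀ x ∈ A, ∀ i, eval x (f i) ≤ c i) (hAC : asymCone A ⊆ C)
    (h₀ : 0 ∈ SOLs C fun i => recPoly (f i)) : asymCone A ⊆ SOLs C fun i => recPoly (f i) :=
  fun _ hv => mem_SOLs_of_le h₀ (hAC hv)
    fun i => recPoly_le_recPoly_zero_of_mem_asymCone (fun x hx => hA x hx i) hv

end AsymptoticDirections

theorem stmt11_general {n q : ℕ} (K : Set (Fin n → ℝ)) (hKne : K.Nonempty)
    (f : Fin q → MvPolynomial (Fin n) ℝ)
    (xbar : Fin n → ℝ)
    (I : Finset (Fin q)) (hI : I.Nonempty)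
    (hbd : ∀ i ∈ I, ∃ m : ℝ, ∀ x ∈ {x ∈ K | ∀ j, eval x (f j) ≤ eval xbar (f j)},
      m ≤ eval x (f i)) :
    ((∀ x : ℕ → (Fin n → ℝ), (∀ k, x k ∈ K) →
        Filter.Tendsto (fun k => ‖x k‖) Filter.atTop Filter.atTop →
        (∀ k, ∀ i, eval (x k) (f i) ≤ eval xbar (f i)) →
        Filter.Tendsto (fun k => ‖(fun i : {i // i ∈ I} => eval (x k) (f i.1))‖)
          Filter.atTop Filter.atTop) ↔
      (∃ S : Set (Fin n → ℝ), IsClosed S ∧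
        asymCone {x ∈ K | ∀ j, eval x (f j) ≤ eval xbar (f j)} ⊆ asymCone S ∧
        asymCone S ⊆ asymCone K ∧
        ∃ lam : Fin q → ℝ, (∀ i, 0 ≤ lam i) ∧ lam ≠ 0 ∧
          SOLmin (asymCone S) (recPoly (∑ i, MvPolynomial.C (lam i) * f i)) = {0})) ∧
    ((∃ S : Set (Fin n → ℝ), IsClosed S ∧
        asymCone {x ∈ K | ∀ j, eval x (f j) ≤ eval xbar (f j)} ⊆ asymCone S ∧
        asymCone S ⊆ asymCone K ∧
        ∃ lam : Fin q → ℝ, (∀ i, 0 ≤ lam i) ∧ lam ≠ 0 ∧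
          SOLmin (asymCone S) (recPoly (∑ i, MvPolynomial.C (lam i) * f i)) = {0}) ↔
      (∃ S : Set (Fin n → ℝ), IsClosed S ∧
        asymCone {x ∈ K | ∀ j, eval x (f j) ≤ eval xbar (f j)} ⊆ asymCone S ∧
        asymCone S ⊆ asymCone K ∧
        SOLw (asymCone S) (fun i => recPoly (f i)) = {0})) ∧
    ((∃ S : Set (Fin n → ℝ), IsClosed S ∧
        asymCone {x ∈ K | ∀ j, eval x (f j) ≤ eval xbar (f j)} ⊆ asymCone S ∧
        asymCone S ⊆ asymCone K ∧
        SOLw (asymCone S) (fun i => recPoly (f i)) = {0}) ↔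
      (∃ S : Set (Fin n → ℝ), IsClosed S ∧
        asymCone {x ∈ K | ∀ j, eval x (f j) ≤ eval xbar (f j)} ⊆ asymCone S ∧
        asymCone S ⊆ asymCone K ∧
        SOLs (asymCone S) (fun i => recPoly (f i)) = {0})) := by
  set Kx := {x ∈ K | ∀ j, eval x (f j) ≤ eval xbar (f j)}
  have hKx : ∀ x ∈ Kx, ∀ i, eval x (f i) ≤ eval xbar (f i) := fun _ hx => hx.2
  obtain ⟨i₀, -⟩ := hI
  have : Nonempty (Fin q) := ⟨i₀⟩
  choose m hm using hbd
  have hI_bdd : IsBounded ((fun x (i : {i // i ∈ I}) => eval x (f i.1)) '' Kx) :=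
    (Metric.isBounded_Icc (fun i => m i.1 i.2) fun i => eval xbar (f i.1)).subset <| by
      rintro _ ⟨x, hx, rfl⟩
      exact ⟨fun i => hm i.1 i.2 x hx, fun i => hx.2 i.1⟩
  have hi := isBounded_iff_forall_tendsto_norm_comp hI_bdd
  have hii := exists_isClosed_asymCone_between_iff (A := Kx) hKne
    (fun C => ∃ lam : Fin q → ℝ, (∀ i, 0 ≤ lam i) ∧ lam ≠ 0 ∧
      SOLmin C (recPoly (∑ i, MvPolynomial.C (lam i) * f i)) = {0})
    ⟨1, fun _ => zero_le_one, one_ne_zero, SOLmin_singleton _⟩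
    fun _ hAC ⟨_, hlam, _, h⟩ =>
      h ▸ asymCone_subset_SOLmin (fun x hx => eval_sum_C_mul_le hlam (hKx x hx)) hAC (h ▸ rfl)
  have hiii := exists_isClosed_asymCone_between_iff (A := Kx) hKne
    (fun C => SOLw C (fun i => recPoly (f i)) = {0}) (SOLw_singleton _)
    fun _ hAC h => h ▸ asymCone_subset_SOLw hKx hAC (h ▸ rfl)
  have hiv := exists_isClosed_asymCone_between_iff (A := Kx) hKne
    (fun C => SOLs C (fun i => recPoly (f i)) = {0}) (SOLs_singleton _)
    fun _ hAC h => h ▸ asymCone_subset_SOLs hKx hAC (h ▸ rfl)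
  refine ⟨Iff.trans ?_ (hi.trans hii.symm), hii.trans hiii.symm, hiii.trans hiv.symm⟩
  exact ⟨fun h x hx hx' => h x (fun k => (hx k).1) hx' fun k => (hx k).2,
    fun h x hxK hx hle => h x (fun k => ⟨hxK k, hle k⟩) hx⟩

theorem stmt11 {n q : ℕ} (K : Set (Fin n → ℝ)) (hKne : K.Nonempty) (hKcl : IsClosed K)
    (f : Fin q → MvPolynomial (Fin n) ℝ) (hdeg : ∀ i, 1 ≤ (f i).totalDegree)
    (xbar : Fin n → ℝ) (hx : xbar ∈ K)
    (I : Finset (Fin q)) (hI : I.Nonempty)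
    (hbd : ∀ i ∈ I, ∃ m : ℝ, ∀ x ∈ {x ∈ K | ∀ j, eval x (f j) ≤ eval xbar (f j)},
      m ≤ eval x (f i)) :
    ((∀ x : ℕ → (Fin n → ℝ), (∀ k, x k ∈ K) →
        Filter.Tendsto (fun k => ‖x k‖) Filter.atTop Filter.atTop →
        (∀ k, ∀ i, eval (x k) (f i) ≤ eval xbar (f i)) →
        Filter.Tendsto (fun k => ‖(fun i : {i // i ∈ I} => eval (x k) (f i.1))‖)
          Filter.atTop Filter.atTop) ↔
      (∃ S : Set (Fin n → ℝ), IsClosed S ∧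
        asymCone {x ∈ K | ∀ j, eval x (f j) ≤ eval xbar (f j)} ⊆ asymCone S ∧
        asymCone S ⊆ asymCone K ∧
        ∃ lam : Fin q → ℝ, (∀ i, 0 ≤ lam i) ∧ lam ≠ 0 ∧
          SOLmin (asymCone S) (recPoly (∑ i, MvPolynomial.C (lam i) * f i)) = {0})) ∧
    ((∃ S : Set (Fin n → ℝ), IsClosed S ∧
        asymCone {x ∈ K | ∀ j, eval x (f j) ≤ eval xbar (f j)} ⊆ asymCone S ∧
        asymCone S ⊆ asymCone K ∧
        ∃ lam : Fin q → ℝ, (∀ i, 0 ≤ lam i) ∧ lam ≠ 0 ∧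
          SOLmin (asymCone S) (recPoly (∑ i, MvPolynomial.C (lam i) * f i)) = {0}) ↔
      (∃ S : Set (Fin n → ℝ), IsClosed S ∧
        asymCone {x ∈ K | ∀ j, eval x (f j) ≤ eval xbar (f j)} ⊆ asymCone S ∧
        asymCone S ⊆ asymCone K ∧
        SOLw (asymCone S) (fun i => recPoly (f i)) = {0})) ∧
    ((∃ S : Set (Fin n → ℝ), IsClosed S ∧
        asymCone {x ∈ K | ∀ j, eval x (f j) ≤ eval xbar (f j)} ⊆ asymCone S ∧
        asymCone S ⊆ asymCone K ∧
        SOLw (asymCone S) (fun i => recPoly (f i)) = {0}) ↔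
      (∃ S : Set (Fin n → ℝ), IsClosed S ∧
        asymCone {x ∈ K | ∀ j, eval x (f j) ≤ eval xbar (f j)} ⊆ asymCone S ∧
        asymCone S ⊆ asymCone K ∧
        SOLs (asymCone S) (fun i => recPoly (f i)) = {0})) :=
  stmt11_general K hKne f xbar I hI hbd
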